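/- arXiv:1006.1770 — 3 statements merged into one kernel-verified Lean document; each statement's English description precedes it below -/
import Mathlib

section
/- The number of symmetric lattice paths p = (p_0,...,p_g) (i.e., with p_i = p_{g−i} for all i) satisfying p_0 = p_g = 1, p_i ≥ 1, and |p_i − p_{i−1}| = 1, where g = 2d−2, equals the central binomial coefficient C(d−1, ⌈(d−1)/2⌉). -/
/-- A lattice path `p = (p_0, ..., p_g)` of integers with `p_0 = p_g = 1`,
`p_i ≥ 1` for all `i`, and `|p_i - p_{i-1}| = 1` for `i ∈ {1,...,g}`. -/
def IsLatticePath (g : ℕ) (p : Fin (g + 1) → ℤ) : Prop :=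
  p 0 = 1 ∧ p (Fin.last g) = 1 ∧ (∀ i, 1 ≤ p i) ∧
    ∀ i : Fin g, |p i.succ - p i.castSucc| = 1

def cnt : ℕ → ℕ → ℕ
  | 0, 0 => 0
  | 0, _ + 1 => 1
  | _ + 1, 0 => 0
  | n + 1, h + 1 => cnt n (h + 2) + cnt n h

def chi (n h m : ℕ) : ℕ := if n + 1 ≤ 2 * m + h ∧ 2 * m ≤ n + h then 1 else 0

def F (n h : ℕ) : ℕ := ∑ m ∈ Finset.range (n + 1), chi n h m * n.choose m

lemma chi_rec (n h m : ℕ) (hh : 1 ≤ h) :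
    chi (n+1) h m + chi (n+1) h (m+1) = chi n (h+1) m + chi n (h-1) m := by
  unfold chi; split_ifs <;> omega

lemma F_rec (n h : ℕ) (hh : 1 ≤ h) : F (n+1) h = F n (h+1) + F n (h-1) := by
  have step1 : F (n+1) h
      = ∑ i ∈ Finset.range (n+1), chi (n+1) h (i+1) * n.choose i
        + ∑ m ∈ Finset.range (n+2), chi (n+1) h m * n.choose m := by
    rw [F, Finset.sum_range_succ' (fun m => chi (n+1) h m * (n+1).choose m)]
    rw [Finset.sum_range_succ' (fun m => chi (n+1) h m * n.choose m)]
    simp only [Nat.choose_succ_succ, Nat.mul_add, Nat.choose_zero_right]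
    rw [Finset.sum_add_distrib]
    ring
  have step2 : ∑ m ∈ Finset.range (n+2), chi (n+1) h m * n.choose m
      = ∑ m ∈ Finset.range (n+1), chi (n+1) h m * n.choose m := by
    rw [Finset.sum_range_succ, Nat.choose_succ_self, Nat.mul_zero, Nat.add_zero]
  rw [step1, step2, ← Finset.sum_add_distrib]
  rw [F, F, ← Finset.sum_add_distrib]
  apply Finset.sum_congr rfl
  intro m _
  rw [← Nat.add_mul, ← Nat.add_mul, Nat.add_comm (chi (n+1) h (m+1)), chi_rec n h m hh]

lemma F_zero (n : ℕ) : F n 0 = 0 := by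
  rw [F]
  apply Finset.sum_eq_zero
  intro m _
  have : chi n 0 m = 0 := by unfold chi; split_ifs <;> omega
  rw [this, Nat.zero_mul]

lemma cnt_zero (n : ℕ) : cnt n 0 = 0 := by cases n <;> rfl

lemma cnt_eq_F (n : ℕ) : ∀ h, cnt n h = F n h := by
  induction n with
  | zero =>
    intro h
    cases h with
    | zero => simp [cnt, F, chi]
    | succ h => simp [cnt, F, chi]
  | succ n ih =>
    intro h
    cases h with
    | zero => rw [cnt_zero, F_zero]
    | succ h =>
      rw [show cnt (n+1) (h+1) = cnt n (h+2) + cnt n h from rfl, ih, ih,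
        F_rec n (h+1) (by omega)]
      rfl

lemma F_one (n : ℕ) : F n 1 = n.choose ((n+1)/2) := by
  rw [F]
  rw [Finset.sum_eq_single ((n+1)/2)]
  · have : chi n 1 ((n+1)/2) = 1 := by unfold chi; rw [if_pos (by omega)]
    rw [this, Nat.one_mul]
  · intro m _ hm
    have : chi n 1 m = 0 := by unfold chi; rw [if_neg (by omega)]
    rw [this, Nat.zero_mul]
  · intro h
    exact absurd (Finset.mem_range.mpr (by omega)) h

def PathSet (n : ℕ) (h : ℤ) : Set (Fin (n + 1) → ℤ) :=
  {q | q 0 = h ∧ (∀ i, 1 ≤ q i) ∧ ∀ i : Fin n, |q i.succ - q i.castSucc| = 1}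

lemma pathset_empty (n : ℕ) (h : ℤ) (hh : h < 1) : PathSet n h = ∅ := by
  ext q
  simp only [PathSet, Set.mem_setOf_eq, Set.mem_empty_iff_false, iff_false]
  rintro ⟨h0, hge, -⟩
  have := hge 0
  omega

lemma pathset_succ (n : ℕ) (h : ℤ) (hh : 1 ≤ h) :
    PathSet (n+1) h = Fin.cons h '' (PathSet n (h+1) ∪ PathSet n (h-1)) := by
  ext p
  constructor
  · rintro ⟨h0, hge, hstep⟩
    refine ⟨Fin.tail p, ?_, ?_⟩
    · have s0 := hstep 0
      simp only [Fin.succ_zero_eq_one, Fin.castSucc_zero] at s0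
      have hmem : Fin.tail p ∈ PathSet n (p 1) := by
        refine ⟨rfl, fun i => hge _, fun i => ?_⟩
        have := hstep i.succ
        rwa [Fin.tail, Fin.tail, Fin.succ_castSucc]
      rcases abs_eq (by norm_num : (0:ℤ) ≤ 1) |>.mp s0 with h1 | h1
      · left
        have hp1 : p 1 = h + 1 := by rw [h0] at h1; omega
        rwa [← hp1]
      · right
        have hp1 : p 1 = h - 1 := by rw [h0] at h1; omega
        rwa [← hp1]
    · rw [← h0]; exact Fin.cons_self_tail p
  · rintro ⟨q, hq, rfl⟩
    have hq0 : q 0 = h + 1 ∨ q 0 = h - 1 := by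
      rcases hq with ⟨h0, -, -⟩ | ⟨h0, -, -⟩
      · left; exact h0
      · right; exact h0
    have hq' : (∀ i, 1 ≤ q i) ∧ ∀ i : Fin n, |q i.succ - q i.castSucc| = 1 := by
      rcases hq with ⟨-, a, b⟩ | ⟨-, a, b⟩ <;> exact ⟨a, b⟩
    refine ⟨Fin.cons_zero _ _, ?_, ?_⟩
    · intro i
      refine Fin.cases ?_ ?_ i
      · rw [Fin.cons_zero]; exact hh
      · intro j; rw [Fin.cons_succ]; exact hq'.1 j
    · intro i
      refine Fin.cases ?_ ?_ i
      · show |(Fin.cons h q : Fin (n+2) → ℤ) (Fin.succ 0) - (Fin.cons h q : Fin (n+2) → ℤ) (Fin.castSucc 0)| = 1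
        rw [Fin.cons_succ, Fin.castSucc_zero, Fin.cons_zero]
        rcases hq0 with h1 | h1 <;> rw [h1] <;> simp
      · intro j
        show |(Fin.cons h q : Fin (n+2) → ℤ) (Fin.succ j).succ - (Fin.cons h q : Fin (n+2) → ℤ) (Fin.succ j).castSucc| = 1
        rw [← Fin.succ_castSucc, Fin.cons_succ, Fin.cons_succ]
        exact hq'.2 j

lemma pathset_finite : ∀ (n : ℕ) (h : ℤ), (PathSet n h).Finite := by
  intro n
  induction n with
  | zero =>
    intro h
    apply Set.Finite.subset (Set.finite_singleton (fun _ => h))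
    rintro p ⟨h0, -, -⟩
    simp only [Set.mem_singleton_iff]
    funext i
    rw [Fin.fin_one_eq_zero i, h0]
  | succ n ih =>
    intro h
    by_cases hh : 1 ≤ h
    · rw [pathset_succ n h hh]
      exact Set.Finite.image _ ((ih (h+1)).union (ih (h-1)))
    · rw [pathset_empty _ h (by omega)]
      exact Set.finite_empty

lemma pathset_ncard : ∀ (n : ℕ) (h : ℤ), 1 ≤ h → (PathSet n h).ncard = cnt n h.toNat := by
  intro n
  induction n with
  | zero =>
    intro h hh
    have : PathSet 0 h = {fun _ => h} := by
      ext q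
      constructor
      · rintro ⟨h0, -, -⟩
        funext i
        rw [Fin.fin_one_eq_zero i, h0]
      · rintro rfl
        exact ⟨rfl, fun _ => hh, fun i => i.elim0⟩
    rw [this, Set.ncard_singleton]
    obtain ⟨t, ht⟩ : ∃ t, h.toNat = t + 1 := ⟨h.toNat - 1, by omega⟩
    rw [ht]; rfl
  | succ n ih =>
    intro h hh
    have hdisj : Disjoint (PathSet n (h+1)) (PathSet n (h-1)) := by
      rw [Set.disjoint_left]
      rintro q ⟨h1, -, -⟩ ⟨h2, -, -⟩
      omega
    have hinj : Function.Injective (@Fin.cons (n+1) (fun _ => ℤ) h) :=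
      Fin.cons_right_injective _
    rw [pathset_succ n h hh, Set.ncard_image_of_injective _ hinj,
      Set.ncard_union_eq hdisj (pathset_finite n (h+1)) (pathset_finite n (h-1))]
    obtain ⟨t, rfl⟩ : ∃ t : ℕ, h = (t : ℤ) + 1 := ⟨(h-1).toNat, by omega⟩
    rcases Nat.eq_zero_or_pos t with rfl | ht
    · have h0 : ((0:ℕ):ℤ) + 1 - 1 = 0 := by norm_num
      rw [h0, pathset_empty n 0 (by norm_num), Set.ncard_empty, ih _ (by norm_num)]
      have e1 : (((0:ℕ):ℤ)+1+1).toNat = 2 := by omega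
      have e2 : (((0:ℕ):ℤ)+1).toNat = 1 := by omega
      rw [e1, e2]
      show cnt n 2 + 0 = cnt n 2 + cnt n 0
      rw [cnt_zero]
    · rw [ih _ (by omega), ih _ (by omega)]
      have e1 : ((t:ℤ)+1+1).toNat = t + 2 := by omega
      have e2 : ((t:ℤ)+1-1).toNat = t := by omega
      have e3 : ((t:ℤ)+1).toNat = t + 1 := by omega
      rw [e1, e2, e3]
      rfl

lemma apply_mk_eq {α : Type*} {k : ℕ} (q : Fin k → α) {a b : ℕ} (ha : a < k) (hb : b < k)
    (h : a = b) : q ⟨a, ha⟩ = q ⟨b, hb⟩ := by subst h; rfl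

def restr (n : ℕ) (p : Fin (2*n+1) → ℤ) : Fin (n+1) → ℤ :=
  fun i => p ⟨i.val, by omega⟩

lemma restr_apply (n : ℕ) (p : Fin (2*n+1) → ℤ) (i : Fin (n+1)) :
    restr n p i = p ⟨i.val, by omega⟩ := rfl

def ext2 (n : ℕ) (q : Fin (n+1) → ℤ) : Fin (2*n+1) → ℤ :=
  fun i => q ⟨min i.val (2*n - i.val), by omega⟩

lemma ext2_apply (n : ℕ) (q : Fin (n+1) → ℤ) (i : Fin (2*n+1)) :
    ext2 n q i = q ⟨min i.val (2*n - i.val), by omega⟩ := rfl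

lemma sym_eq (n : ℕ) :
    {p : Fin (2*n+1) → ℤ | IsLatticePath (2*n) p ∧ ∀ i, p i = p i.rev}.ncard
      = (PathSet n 1).ncard := by
  set S := {p : Fin (2*n+1) → ℤ | IsLatticePath (2*n) p ∧ ∀ i, p i = p i.rev} with hS
  have hrev : ∀ i : Fin (2*n+1), (Fin.rev i).val = 2*n - i.val := by
    intro i
    have := Fin.val_rev i
    omega
  have hinj : Set.InjOn (restr n) S := by
    intro p hp p' hp' hrpp
    have key : ∀ v : ℕ, (hv : v < n + 1) → p ⟨v, by omega⟩ = p' ⟨v, by omega⟩ := by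
      intro v hv
      have := congrFun hrpp ⟨v, hv⟩
      rwa [restr_apply, restr_apply] at this
    funext i
    rcases le_or_gt i.val n with hle | hgt
    · have h1 : p i = p ⟨i.val, i.isLt⟩ := rfl
      have h2 : p' i = p' ⟨i.val, i.isLt⟩ := rfl
      rw [h1, h2]
      exact key i.val (by omega)
    · have e1 := hp.2 i
      have e2 := hp'.2 i
      rw [e1, e2]
      have h1 : p i.rev = p ⟨(Fin.rev i).val, i.rev.isLt⟩ := rfl
      have h2 : p' i.rev = p' ⟨(Fin.rev i).val, i.rev.isLt⟩ := rfl
      rw [h1, h2]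
      have hv : (Fin.rev i).val < n + 1 := by rw [hrev]; omega
      exact key (Fin.rev i).val hv
  have himg : restr n '' S = PathSet n 1 := by
    ext q
    constructor
    · rintro ⟨p, ⟨⟨hp0, hpl, hpge, hpstep⟩, hpsym⟩, rfl⟩
      refine ⟨?_, fun i => hpge _, fun i => ?_⟩
      · rw [restr_apply]
        rw [show ((⟨((0 : Fin (n+1))).val, by omega⟩ : Fin (2*n+1))) = 0 by
          ext; simp]
        exact hp0
      · rw [restr_apply, restr_apply]
        set j : Fin (2*n) := ⟨i.val, by omega⟩ with hj
        have hs := hpstep j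
        have e1 : (⟨(Fin.succ i).val, by omega⟩ : Fin (2*n+1)) = j.succ := by
          ext; simp [hj]
        have e2 : (⟨(Fin.castSucc i).val, by omega⟩ : Fin (2*n+1)) = j.castSucc := by
          ext; simp [hj]
        rw [e1, e2]
        exact hs
    · rintro ⟨hq0, hqge, hqstep⟩
      refine ⟨ext2 n q, ⟨⟨?_, ?_, fun i => hqge _, ?_⟩, ?_⟩, ?_⟩
      · rw [ext2_apply]
        rw [apply_mk_eq q _ (by omega : 0 < n + 1) (by simp), Fin.mk_zero]
        exact hq0
      · rw [ext2_apply]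
        rw [apply_mk_eq q _ (by omega : 0 < n + 1) (by simp [Fin.val_last]), Fin.mk_zero]
        exact hq0
      · intro i
        rw [ext2_apply, ext2_apply]
        have hsv : (Fin.succ i).val = i.val + 1 := Fin.val_succ i
        have hcv : (Fin.castSucc i).val = i.val := Fin.coe_castSucc i
        have hlt := i.isLt
        rcases lt_or_ge i.val n with hin | hin
        · set j : Fin n := ⟨i.val, hin⟩ with hj
          have hs := hqstep j
          have e1 : (⟨min (Fin.succ i).val (2*n - (Fin.succ i).val), by omega⟩ : Fin (n+1))
              = j.succ := by ext; simp [hj, hsv]; omega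
          have e2 : (⟨min (Fin.castSucc i).val (2*n - (Fin.castSucc i).val), by omega⟩ : Fin (n+1))
              = j.castSucc := by ext; simp [hj, hcv]; omega
          rw [e1, e2]
          exact hs
        · set j : Fin n := ⟨2*n - i.val - 1, by omega⟩ with hj
          have hs := hqstep j
          have e1 : (⟨min (Fin.succ i).val (2*n - (Fin.succ i).val), by omega⟩ : Fin (n+1))
              = j.castSucc := by ext; simp [hj, hsv]; omega
          have e2 : (⟨min (Fin.castSucc i).val (2*n - (Fin.castSucc i).val), by omega⟩ : Fin (n+1))
              = j.succ := by ext; simp [hj, hcv]; omega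
          rw [e1, e2, abs_sub_comm]
          exact hs
      · intro i
        rw [ext2_apply, ext2_apply]
        apply apply_mk_eq
        rw [hrev]
        omega
      · funext i
        rw [restr_apply, ext2_apply]
        rw [apply_mk_eq q _ i.isLt (by simp; omega), Fin.eta]
  rw [← himg, Set.ncard_image_of_injOn hinj]

lemma ceil_half (n : ℕ) : ⌈(((n:ℚ)+1) - 1)/2⌉₊ = (n+1)/2 := by
  have h : (((n:ℚ)+1) - 1) = (n:ℚ) := by ring
  rw [h]
  rcases Nat.even_or_odd n with ⟨k, hk⟩ | ⟨k, hk⟩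
  · subst hk
    rw [show ((k+k : ℕ):ℚ)/2 = (k:ℚ) by push_cast; ring, Nat.ceil_natCast]
    omega
  · subst hk
    rw [show ((2*k+1 : ℕ):ℚ)/2 = (k:ℚ) + 1/2 by push_cast; ring,
      show (2*k+1+1)/2 = k+1 from by omega,
      Nat.ceil_eq_iff (by omega : k + 1 ≠ 0)]
    constructor
    · push_cast
      norm_num
    · push_cast
      norm_num

/-- The number of symmetric lattice paths (`p_i = p_{g-i}` for all `i`) of genus
`g = 2d - 2` equals the central binomial coefficient `C(d-1, ⌈(d-1)/2⌉)`. -/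
theorem stmt_3 (d : ℕ) (hd : 1 ≤ d) :
    {p : Fin (2 * d - 2 + 1) → ℤ |
        IsLatticePath (2 * d - 2) p ∧ ∀ i, p i = p i.rev}.ncard
      = (d - 1).choose ⌈((d : ℚ) - 1) / 2⌉₊ := by
  obtain ⟨n, rfl⟩ : ∃ n, d = n + 1 := ⟨d - 1, by omega⟩
  show {p : Fin (2*n+1) → ℤ | IsLatticePath (2*n) p ∧ ∀ i, p i = p i.rev}.ncard
      = (n+1-1).choose ⌈(((n+1:ℕ):ℚ) - 1)/2⌉₊
  rw [sym_eq n, pathset_ncard n 1 (by norm_num), show ((1:ℤ)).toNat = 1 from rfl,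
    cnt_eq_F, F_one, show n + 1 - 1 = n from rfl]
  congr 1
  rw [show ((n+1:ℕ):ℚ) - 1 = ((n:ℚ)+1) - 1 by push_cast; ring]
  exact (ceil_half n).symm
end

section
/- The sum over m in {1,...,d} with m ≡ d (mod 2) of (m/d)·C(d, (d−m)/2) equals C(d−1, ⌈(d−1)/2⌉). -/
/-! Substituting `m = d - 2k` turns the sum into `∑_{k ≤ ⌊(d-1)/2⌋} (d - 2k)/d · C(d, k)`.
Each term is the ballot number `C(d-1, k) - C(d-1, k-1)`, so the sum telescopes to
`C(d-1, ⌊(d-1)/2⌋)`, which equals `C(d-1, ⌈(d-1)/2⌉)` by symmetry. -/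

open Finset

theorem Finset.sum_filter_Icc_mod_two_eq {M : Type*} [AddCommMonoid M] (d : ℕ) (f : ℕ → M) :
    ∑ m ∈ (Icc 1 d).filter (fun m => m % 2 = d % 2), f m
      = ∑ k ∈ range ((d + 1) / 2), f (d - 2 * k) := by
  refine sum_nbij' (fun m => (d - m) / 2) (fun k => d - 2 * k) ?_ ?_ ?_ ?_ ?_ <;>
    intro m hm <;> simp only [mem_filter, mem_Icc, mem_range] at hm ⊢
  all_goals first | omega | congr 1; omega

theorem Nat.ceil_natCast_div_two {K : Type*} [Field K] [LinearOrder K] [IsStrictOrderedRing K]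
    [FloorSemiring K] (n : ℕ) : ⌈(n : K) / 2⌉₊ = (n + 1) / 2 := by
  obtain ⟨q, rfl | rfl⟩ := n.even_or_odd'
  · rw [show (2 * q + 1) / 2 = q by omega, Nat.cast_mul, Nat.cast_two,
      mul_div_cancel_left₀ _ two_ne_zero, Nat.ceil_natCast]
  · rw [show (2 * q + 1 + 1) / 2 = q + 1 by omega, Nat.ceil_eq_iff q.succ_ne_zero]
    push_cast
    constructor <;> linarith

theorem sub_two_mul_mul_choose_succ {R : Type*} [CommRing R] (n k : ℕ) :
    ((n + 1 : R) - 2 * (k + 1)) * (n + 1).choose (k + 1)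
      = (n + 1) * (n.choose (k + 1) - n.choose k) := by
  have hsucc : (n + 1 : R) * n.choose k = (n + 1).choose (k + 1) * (k + 1) := by
    simpa using congrArg (Nat.cast (R := R)) (n.add_one_mul_choose_eq k)
  have hpred : (n.choose (k + 1) : R) * (n + 1) = (n + 1).choose (k + 1) * (n - k) := by
    rcases le_or_gt k n with hk | hk
    · have := congrArg (Nat.cast (R := R)) (n.choose_mul_succ_eq (k + 1))
      rwa [show n + 1 - (k + 1) = n - k by omega, Nat.cast_mul, Nat.cast_mul, Nat.cast_sub hk,
        Nat.cast_succ] at this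
    · simp [Nat.choose_eq_zero_of_lt (by omega : n < k + 1),
        Nat.choose_eq_zero_of_lt (by omega : n + 1 < k + 1)]
  linear_combination hsucc - hpred

theorem sum_range_sub_two_mul_div_mul_choose {K : Type*} [Field K] [CharZero K] (n N : ℕ) :
    ∑ k ∈ range (N + 1), ((n + 1 : K) - 2 * k) / (n + 1) * (n + 1).choose k = n.choose N := by
  induction N with
  | zero => simp [div_self (Nat.cast_add_one_ne_zero n : (n + 1 : K) ≠ 0)]
  | succ N ih =>
    rw [sum_range_succ, ih, div_mul_eq_mul_div, Nat.cast_succ, sub_two_mul_mul_choose_succ,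
      mul_div_cancel_left₀ _ (Nat.cast_add_one_ne_zero n), add_sub_cancel]

/-- The sum over `m ∈ {1,...,d}` with `m ≡ d (mod 2)` of `(m/d)·C(d, (d-m)/2)`
equals the central binomial coefficient `C(d-1, ⌈(d-1)/2⌉)`. -/
theorem stmt_4 (d : ℕ) (hd : 1 ≤ d) :
    ∑ m ∈ (Finset.Icc 1 d).filter (fun m => m % 2 = d % 2),
        (m : ℚ) / d * (d.choose ((d - m) / 2))
      = ((d - 1).choose ⌈((d : ℚ) - 1) / 2⌉₊ : ℚ) := by
  obtain ⟨n, rfl⟩ : ∃ n, d = n + 1 := ⟨d - 1, by omega⟩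
  rw [sum_filter_Icc_mod_two_eq, show (n + 1 + 1) / 2 = n / 2 + 1 by omega]
  have hterm : ∀ k ∈ range (n / 2 + 1), ((n + 1 - 2 * k : ℕ) : ℚ) / (n + 1 : ℕ)
      * (n + 1).choose ((n + 1 - (n + 1 - 2 * k)) / 2)
      = ((n + 1 : ℚ) - 2 * k) / (n + 1) * (n + 1).choose k := by
    intro k hk
    have h2k : 2 * k ≤ n + 1 := by simp only [mem_range] at hk; omega
    rw [Nat.cast_sub h2k, show (n + 1 - (n + 1 - 2 * k)) / 2 = k by omega]
    push_cast
    rfl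
  rw [sum_congr rfl hterm, sum_range_sub_two_mul_div_mul_choose, Nat.add_sub_cancel,
    Nat.cast_add_one, add_sub_cancel_right, Nat.ceil_natCast_div_two]
  exact_mod_cast (Nat.choose_symm_of_eq_add (by omega)).symm
end

section
/- The number of symmetric lattice paths p = (p_0,...,p_g) (p_i = p_{g−i}) with p_0 = p_g = 1, p_i ≥ 1, |p_i − p_{i−1}| = 1, and g = 2d−2, where additionally p_{g/2} = m, equals (m/d)·C(d, (d−m)/2), for each m with 1 ≤ m ≤ d and m ≡ d (mod 2). -/
/-!
A symmetric path of length `2n` (`n = d - 1`) is determined by its first half, and the halves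
are exactly the positive paths of length `n` from `1` to `m`: the inverse of restriction is
composition with the fold `i ↦ min i (2n - i)`. Writing `n + 1 = m + 2k`, the number of these
positive paths is the ballot number `C(n, k) - C(n, m + k)`, which follows by induction on `n`
from the last-step recursion `P(n + 1, m) = P(n, m - 1) + P(n, m + 1)` and Pascal's rule.
It remains to note `d·C(d - 1, k) = (m + k)·C(d, k)` and `d·C(d - 1, m + k) = k·C(d, k)`.
-/

def positivePaths (n : ℕ) (m : ℤ) : Set (Fin (n + 1) → ℤ) :=
  {p | p 0 = 1 ∧ p (Fin.last n) = m ∧ (∀ i, 1 ≤ p i) ∧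
    ∀ i : Fin n, |p i.succ - p i.castSucc| = 1}

namespace positivePaths

variable {n : ℕ} {m : ℤ} {p : Fin (n + 1) → ℤ}

theorem apply_le_val_add_one (hp : p ∈ positivePaths n m) (i : Fin (n + 1)) : p i ≤ i + 1 := by
  obtain ⟨hstart, -, -, hstep⟩ := hp
  induction i using Fin.induction with
  | zero => simp [hstart]
  | succ j ih =>
    have := (abs_le.mp (hstep j).le).2
    simp only [Fin.val_succ, Fin.val_castSucc, Nat.cast_add, Nat.cast_one] at ih ⊢
    linarith

theorem finite (n : ℕ) (m : ℤ) : (positivePaths n m).Finite :=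
  (Set.Finite.pi' fun _ => Set.finite_Icc (1 : ℤ) (n + 1)).subset fun _ hp i =>
    ⟨hp.2.2.1 i, (apply_le_val_add_one hp i).trans (by linarith [i.is_le])⟩

theorem eq_empty_of_nonpos (hm : m ≤ 0) : positivePaths n m = ∅ :=
  Set.eq_empty_of_forall_notMem fun _ hp => by
    have := hp.2.2.1 (Fin.last n); rw [hp.2.1] at this; omega

theorem eq_empty_of_lt (hm : (n : ℤ) + 1 < m) : positivePaths n m = ∅ :=
  Set.eq_empty_of_forall_notMem fun _ hp => by
    have := apply_le_val_add_one hp (Fin.last n)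
    rw [hp.2.1, Fin.val_last] at this
    omega

theorem zero_one : positivePaths 0 1 = {fun _ => 1} := by
  ext p
  refine ⟨fun hp => funext fun i => by rw [Fin.fin_one_eq_zero i, hp.1], ?_⟩
  rintro rfl
  exact ⟨rfl, rfl, fun _ => le_rfl, fun i => i.elim0⟩

theorem snoc_mem_iff {q : Fin (n + 1) → ℤ} :
    Fin.snoc q m ∈ positivePaths (n + 1) m ↔
      1 ≤ m ∧ (q ∈ positivePaths n (m - 1) ∨ q ∈ positivePaths n (m + 1)) := by
  have hpos :
      (∀ i, 1 ≤ (Fin.snoc q m : Fin (n + 2) → ℤ) i) ↔ (∀ i, 1 ≤ q i) ∧ 1 ≤ m := by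
    simp [Fin.forall_fin_succ']
  have hstep : (∀ i : Fin (n + 1), |(Fin.snoc q m : Fin (n + 2) → ℤ) i.succ -
      (Fin.snoc q m : Fin (n + 2) → ℤ) i.castSucc| = 1) ↔
        (∀ i : Fin n, |q i.succ - q i.castSucc| = 1) ∧ |m - q (Fin.last n)| = 1 := by
    simp [Fin.forall_fin_succ', Fin.succ_castSucc, -Fin.castSucc_succ]
  have hlast : |m - q (Fin.last n)| = 1 ↔ q (Fin.last n) = m - 1 ∨ q (Fin.last n) = m + 1 := by
    rw [abs_eq zero_le_one]; omega
  simp only [positivePaths, Set.mem_ofPred_eq, hpos, hstep, hlast, Fin.snoc_last]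
  rw [show (0 : Fin (n + 2)) = Fin.castSucc 0 from rfl, Fin.snoc_castSucc]
  tauto

theorem ncard_succ (hm : 1 ≤ m) :
    (positivePaths (n + 1) m).ncard =
      (positivePaths n (m - 1)).ncard + (positivePaths n (m + 1)).ncard := by
  have himage : positivePaths (n + 1) m =
      (Fin.snoc · m) '' (positivePaths n (m - 1) ∪ positivePaths n (m + 1)) := by
    ext p
    refine ⟨fun hp => ?_, ?_⟩
    · have hsnoc : Fin.snoc (Fin.init p) m = p := by rw [← hp.2.1]; exact Fin.snoc_init_self p
      exact ⟨Fin.init p, (snoc_mem_iff.mp (by rwa [hsnoc])).2, hsnoc⟩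
    · rintro ⟨q, hq, rfl⟩
      exact snoc_mem_iff.mpr ⟨hm, hq⟩
  have hdisj : Disjoint (positivePaths n (m - 1)) (positivePaths n (m + 1)) :=
    Set.disjoint_left.mpr fun _ h₁ h₂ => by have := h₁.2.1.symm.trans h₂.2.1; omega
  rw [himage, Set.ncard_image_of_injective _ (Fin.snoc_injective2 (α := fun _ => ℤ) |>.left m),
    Set.ncard_union_eq hdisj (finite _ _) (finite _ _)]

-- The ballot number `C(n, k) - C(n, m + k)`, stated without truncated subtraction.
theorem ncard_add_choose {n m k : ℕ} (h : n + 1 = m + 2 * k) :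
    (positivePaths n m).ncard + n.choose (m + k) = n.choose k := by
  induction n generalizing m k with
  | zero =>
    obtain ⟨rfl, rfl⟩ : m = 1 ∧ k = 0 := by omega
    simp [zero_one]
  | succ n ih =>
    rcases m with _ | m
    · simp [eq_empty_of_nonpos le_rfl]
    have hrec : (positivePaths (n + 1) (m + 1 : ℕ)).ncard =
        (positivePaths n m).ncard + (positivePaths n (m + 2 : ℕ)).ncard := by
      have := ncard_succ (n := n) (m := (m + 1 : ℕ)) (by omega)
      rwa [show ((m + 1 : ℕ) : ℤ) - 1 = m by push_cast; ring,
        show ((m + 1 : ℕ) : ℤ) + 1 = (m + 2 : ℕ) by push_cast; ring] at this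
    rw [hrec]
    have hA := ih (m := m) (k := k) (by omega)
    rcases k with _ | k
    · rw [eq_empty_of_lt (n := n) (m := (m + 2 : ℕ)) (by push_cast; omega)]
      have h₁ : n.choose (m + 0) = 0 := Nat.choose_eq_zero_of_lt (by omega)
      have h₂ : (n + 1).choose (m + 1 + 0) = 0 := Nat.choose_eq_zero_of_lt (by omega)
      simp only [Set.ncard_empty, Nat.choose_zero_right] at hA ⊢
      omega
    · have hB := ih (m := m + 2) (k := k) (by omega)
      rw [show m + 1 + (k + 1) = (m + k + 1) + 1 by ring, Nat.choose_succ_succ',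
        Nat.choose_succ_succ']
      rw [show m + 2 + k = m + k + 1 + 1 by ring] at hB
      rw [show m + (k + 1) = m + k + 1 by ring] at hA
      omega

end positivePaths

def foldMiddle (n : ℕ) (i : Fin (2 * n + 1)) : Fin (n + 1) :=
  ⟨min i (2 * n - i), by omega⟩

namespace foldMiddle

variable {n : ℕ}

@[simp]
theorem val_apply (i : Fin (2 * n + 1)) : (foldMiddle n i : ℕ) = min (i : ℕ) (2 * n - i) := rfl

theorem apply_castLE (j : Fin (n + 1)) : foldMiddle n (Fin.castLE (by omega) j) = j :=
  Fin.ext (by simp only [val_apply, Fin.val_castLE]; omega)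

theorem surjective (n : ℕ) : Function.Surjective (foldMiddle n) :=
  fun j => ⟨_, apply_castLE j⟩

theorem abs_sub_succ_castSucc {q : Fin (n + 1) → ℤ}
    (hq : ∀ j : Fin n, |q j.succ - q j.castSucc| = 1) (i : Fin (2 * n)) :
    |q (foldMiddle n i.succ) - q (foldMiddle n i.castSucc)| = 1 := by
  rcases lt_or_ge (i : ℕ) n with hi | hi
  · convert hq ⟨i, hi⟩ using 4 <;> ext <;>
      simp only [val_apply, Fin.val_succ, Fin.val_castSucc] <;> omega
  · rw [abs_sub_comm]
    convert hq ⟨2 * n - 1 - i, by omega⟩ using 4 <;> ext <;>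
      simp only [val_apply, Fin.val_succ, Fin.val_castSucc] <;> omega

end foldMiddle

theorem symmetric_latticePaths_eq_image (n : ℕ) (m : ℤ) :
    {p : Fin (2 * n + 1) → ℤ |
        IsLatticePath (2 * n) p ∧ (∀ i, p i = p i.rev) ∧ p ⟨n, by omega⟩ = m} =
      (· ∘ foldMiddle n) '' positivePaths n m := by
  ext p
  constructor
  · rintro ⟨⟨hstart, -, hpos, hstep⟩, hsym, hmid⟩
    refine ⟨p ∘ Fin.castLE (by omega),
      ⟨hstart, hmid, fun _ => hpos _, fun j => hstep ⟨j, by omega⟩⟩, ?_⟩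
    funext i
    rcases le_or_gt (i : ℕ) n with hi | hi
    · exact congrArg p (Fin.ext (by simp only [foldMiddle.val_apply, Fin.val_castLE]; omega))
    · rw [hsym i]
      exact congrArg p <| Fin.ext <| by
        simp only [foldMiddle.val_apply, Fin.val_castLE, Fin.val_rev]; omega
  · rintro ⟨q, ⟨hstart, hlast, hpos, hstep⟩, rfl⟩
    refine ⟨⟨?_, ?_, fun _ => hpos _, foldMiddle.abs_sub_succ_castSucc hstep⟩,
      fun i => ?_, ?_⟩
    · rw [← hstart]; exact congrArg q (Fin.ext (by simp))
    · rw [← hstart]; exact congrArg q (Fin.ext (by simp))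
    · exact congrArg q (Fin.ext (by simp only [foldMiddle.val_apply, Fin.val_rev]; omega))
    · rw [← hlast]
      exact congrArg q (Fin.ext (by simp only [foldMiddle.val_apply, Fin.val_last]; omega))

theorem ncard_symmetric_latticePaths {g n : ℕ} (hg : g = 2 * n) (m : ℤ) :
    {p : Fin (g + 1) → ℤ |
        IsLatticePath g p ∧ (∀ i, p i = p i.rev) ∧ p ⟨n, by omega⟩ = m}.ncard =
      (positivePaths n m).ncard := by
  subst hg
  rw [symmetric_latticePaths_eq_image,
    Set.ncard_image_of_injective _ (foldMiddle.surjective n).injective_comp_right]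

/-- The number of symmetric lattice paths (`p_i = p_{g-i}`) of genus `g = 2d-2`
with `p_{g/2} = m` equals `(m/d)·C(d, (d-m)/2)`, for `1 ≤ m ≤ d`,
`m ≡ d (mod 2)`. -/
theorem stmt_17 (d m : ℕ) (hd : 1 ≤ d) (hmd : m ≤ d)
    (hpar : m % 2 = d % 2) :
    {p : Fin (2 * d - 2 + 1) → ℤ |
        IsLatticePath (2 * d - 2) p ∧ (∀ i, p i = p i.rev) ∧
          p ⟨d - 1, by omega⟩ = (m : ℤ)}.ncard * d
      = m * d.choose ((d - m) / 2) := by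
  obtain ⟨k, hk⟩ : ∃ k, d = m + 2 * k := ⟨(d - m) / 2, by omega⟩
  rw [ncard_symmetric_latticePaths (n := d - 1) (by omega), show (d - m) / 2 = k by omega]
  obtain ⟨n, rfl⟩ : ∃ n, d = n + 1 := ⟨d - 1, by omega⟩
  rw [Nat.add_sub_cancel]
  have hballot := congrArg (· * (n + 1)) (positivePaths.ncard_add_choose (m := m) (k := k) hk)
  have hk_choose := Nat.choose_mul_succ_eq n k
  have hmk_choose := Nat.choose_mul_succ_eq n (m + k)
  rw [Nat.choose_symm_of_eq_add (show n + 1 = m + k + k by omega),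
    show n + 1 - (m + k) = k by omega] at hmk_choose
  rw [show n + 1 - k = m + k by omega] at hk_choose
  simp only [add_mul] at hballot
  linarith
end
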